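/- arXiv:1708.02833 — 7 statements merged into one kernel-verified Lean document; each statement's English description precedes it below -/
import Mathlib

section
/- Let A, B be finite families of subsets of a finite set S of size n such that (A,B) is a cancellative pair and every set in A and every set in B has exactly k elements, where k ≤ n. Then |A| * |B| ≤ 2^(2*(n-k)). -/
/-!
Fix `a ∈ A`. Cancellativity makes `b ↦ a ∪ b` injective on `B`, and `a ∪ b` is determined by
`b \ a ⊆ aᶜ`, so `|B| ≤ 2 ^ |aᶜ| = 2 ^ (n - k)`. Symmetrically `|A| ≤ 2 ^ (n - k)`.
-/

def Cancellative {α : Type*} [DecidableEq α] (A B : Finset (Finset α)) : Prop :=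
  (∀ a1 ∈ A, ∀ a2 ∈ A, ∀ b ∈ B, a1 ∪ b = a2 ∪ b → a1 = a2) ∧
  (∀ a ∈ A, ∀ b1 ∈ B, ∀ b2 ∈ B, a ∪ b1 = a ∪ b2 → b1 = b2)

namespace Finset

variable {α : Type*} [DecidableEq α] [Fintype α]

theorem card_le_two_pow_card_compl_of_injOn_union {a : Finset α} {B : Finset (Finset α)}
    (h : Set.InjOn (a ∪ ·) B) : B.card ≤ 2 ^ aᶜ.card := by
  rw [← card_powerset]
  refine card_le_card_of_injOn (· \ a) (fun _ _ => by simp) fun b₁ hb₁ b₂ hb₂ hsdiff => ?_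
  exact h hb₁ hb₂ (by simpa only [union_sdiff_self_eq_union] using congrArg (a ∪ ·) hsdiff)

end Finset

namespace Cancellative

variable {α : Type*} [DecidableEq α] [Fintype α] {A B : Finset (Finset α)}

theorem card_right_le (hc : Cancellative A B) {a : Finset α} (ha : a ∈ A) :
    B.card ≤ 2 ^ aᶜ.card :=
  Finset.card_le_two_pow_card_compl_of_injOn_union fun _ hb₁ _ hb₂ => hc.2 a ha _ hb₁ _ hb₂

theorem card_left_le (hc : Cancellative A B) {b : Finset α} (hb : b ∈ B) :
    A.card ≤ 2 ^ bᶜ.card :=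
  Finset.card_le_two_pow_card_compl_of_injOn_union fun a₁ ha₁ a₂ ha₂ h =>
    hc.1 a₁ ha₁ a₂ ha₂ b hb (by simpa only [Finset.union_comm b] using h)

end Cancellative

theorem uniform_cancellative_bound_general {α : Type*} [DecidableEq α] [Fintype α]
    (n k : ℕ) (hn : Fintype.card α = n)
    (A B : Finset (Finset α)) (hc : Cancellative A B)
    (hA : ∀ a ∈ A, a.card = k) (hB : ∀ b ∈ B, b.card = k) :
    A.card * B.card ≤ 2 ^ (2 * (n - k)) := by
  rcases A.eq_empty_or_nonempty with rfl | ⟨a, ha⟩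
  · simp
  rcases B.eq_empty_or_nonempty with rfl | ⟨b, hb⟩
  · simp
  calc A.card * B.card ≤ 2 ^ bᶜ.card * 2 ^ aᶜ.card :=
        Nat.mul_le_mul (hc.card_left_le hb) (hc.card_right_le ha)
    _ = 2 ^ (2 * (n - k)) := by
      rw [Finset.card_compl, Finset.card_compl, hA a ha, hB b hb, hn, ← pow_add, two_mul]

theorem uniform_cancellative_bound {α : Type*} [DecidableEq α] [Fintype α]
    (n k : ℕ) (hn : Fintype.card α = n) (hk : k ≤ n)
    (A B : Finset (Finset α)) (hc : Cancellative A B)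
    (hA : ∀ a ∈ A, a.card = k) (hB : ∀ b ∈ B, b.card = k) :
    A.card * B.card ≤ 2 ^ (2 * (n - k)) :=
  uniform_cancellative_bound_general n k hn A B hc hA hB
end

section
/- Let A, B be finite families of subsets of a finite set S with (A,B) cancellative, all sets in A and B of size exactly k, and |S| = n ≤ 2k. Then |A| * |B| ≤ 2^n. -/
theorem uniform_cancellative_bound_small {α : Type*} [DecidableEq α] [Fintype α]
    (n k : ℕ) (hn : Fintype.card α = n) (hkn : n ≤ 2 * k)
    (A B : Finset (Finset α)) (hc : Cancellative A B)
    (hA : ∀ a ∈ A, a.card = k) (hB : ∀ b ∈ B, b.card = k) :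
    A.card * B.card ≤ 2 ^ n := by
  rcases A.eq_empty_or_nonempty with rfl | ⟨a₀, ha₀⟩
  · simp
  rcases B.eq_empty_or_nonempty with rfl | ⟨b₀, hb₀⟩
  · simp
  have hkn' : k ≤ n := by
    rw [← hn, ← hA a₀ ha₀]
    exact Finset.card_le_card (Finset.subset_univ _)
  -- |A| ≤ 2^(n-k)
  have hAcard : A.card ≤ 2 ^ (n - k) := by
    have hinj : Set.InjOn (fun a => a \ b₀) A := by
      intro a1 h1 a2 h2 h
      simp only at h
      apply hc.1 a1 h1 a2 h2 b₀ hb₀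
      rw [← Finset.sdiff_union_self_eq_union (s := a1), h,
        Finset.sdiff_union_self_eq_union]
    have hmaps : ∀ a ∈ A, a \ b₀ ∈ (Finset.univ \ b₀).powerset := by
      intro a ha
      rw [Finset.mem_powerset]
      exact Finset.sdiff_subset_sdiff (Finset.subset_univ _) le_rfl
    calc A.card ≤ (Finset.univ \ b₀).powerset.card :=
          Finset.card_le_card_of_injOn _ hmaps hinj
      _ = 2 ^ (n - k) := by
          rw [Finset.card_powerset, Finset.card_sdiff_of_subset (Finset.subset_univ _),
            Finset.card_univ, hn, hB b₀ hb₀]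
  have hBcard : B.card ≤ 2 ^ (n - k) := by
    have hinj : Set.InjOn (fun b => b \ a₀) B := by
      intro b1 h1 b2 h2 h
      simp only at h
      apply hc.2 a₀ ha₀ b1 h1 b2 h2
      rw [← Finset.union_sdiff_self_eq_union (t := b1), h,
        Finset.union_sdiff_self_eq_union]
    have hmaps : ∀ b ∈ B, b \ a₀ ∈ (Finset.univ \ a₀).powerset := by
      intro b hb
      rw [Finset.mem_powerset]
      exact Finset.sdiff_subset_sdiff (Finset.subset_univ _) le_rfl
    calc B.card ≤ (Finset.univ \ a₀).powerset.card :=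
          Finset.card_le_card_of_injOn _ hmaps hinj
      _ = 2 ^ (n - k) := by
          rw [Finset.card_powerset, Finset.card_sdiff_of_subset (Finset.subset_univ _),
            Finset.card_univ, hn, hA a₀ ha₀]
  calc A.card * B.card ≤ 2 ^ (n - k) * 2 ^ (n - k) :=
        Nat.mul_le_mul hAcard hBcard
    _ = 2 ^ ((n - k) + (n - k)) := (pow_add 2 _ _).symm
    _ ≤ 2 ^ n := Nat.pow_le_pow_right (by norm_num) (by omega)
end

section
/- A pair (A,B) of families of subsets of a set S is cancellative with respect to unions if and only if it is cancellative with respect to set differences; i.e., the condition (A1 ∪ B1 = A2 ∪ B1 → A1 = A2, and A1 ∪ B1 = A1 ∪ B2 → B1 = B2, for all A1, A2 ∈ A, B1, B2 ∈ B) holds if and only if the condition (A1 \ B1 = A2 \ B1 → A1 = A2, and B1 \ A1 = B2 \ A1 → B1 = B2, for all A1, A2 ∈ A, B1, B2 ∈ B) holds. -/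
theorem cancellative_union_iff_diff {α : Type*} (A B : Set (Set α)) :
    ((∀ a1 ∈ A, ∀ a2 ∈ A, ∀ b ∈ B, a1 ∪ b = a2 ∪ b → a1 = a2) ∧
     (∀ a ∈ A, ∀ b1 ∈ B, ∀ b2 ∈ B, a ∪ b1 = a ∪ b2 → b1 = b2)) ↔
    ((∀ a1 ∈ A, ∀ a2 ∈ A, ∀ b ∈ B, a1 \ b = a2 \ b → a1 = a2) ∧
     (∀ a ∈ A, ∀ b1 ∈ B, ∀ b2 ∈ B, b1 \ a = b2 \ a → b1 = b2)) := by
  constructor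
  · rintro ⟨h1, h2⟩
    constructor
    · intro a1 ha1 a2 ha2 b hb h
      apply h1 a1 ha1 a2 ha2 b hb
      rw [← Set.diff_union_self, h, Set.diff_union_self]
    · intro a ha b1 hb1 b2 hb2 h
      apply h2 a ha b1 hb1 b2 hb2
      rw [Set.union_comm a b1, Set.union_comm a b2,
        ← Set.diff_union_self, h, Set.diff_union_self]
  · rintro ⟨h1, h2⟩
    constructor
    · intro a1 ha1 a2 ha2 b hb h
      apply h1 a1 ha1 a2 ha2 b hb
      rw [← Set.union_diff_right, h, Set.union_diff_right]
    · intro a ha b1 hb1 b2 hb2 h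
      apply h2 a ha b1 hb1 b2 hb2
      rw [← Set.union_diff_right, Set.union_comm, h, Set.union_comm, Set.union_diff_right]
end

section
/- Let (A,B) be a cancellative pair over a ground set S and (A',B') a cancellative pair over a ground set S' disjoint from S. Define A'' = {a ∪ a' : a ∈ A, a' ∈ A'} and B'' = {b ∪ b' : b ∈ B, b' ∈ B'}. Then (A'',B'') is a cancellative pair over S ∪ S', and |A''| = |A|*|A'|, |B''| = |B|*|B'|. -/
private lemma inter_split {α : Type*} [DecidableEq α] {S S' x y : Finset α}
    (hdisj : Disjoint S S') (hx : x ⊆ S) (hy : y ⊆ S') :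
    (x ∪ y) ∩ S = x ∧ (x ∪ y) ∩ S' = y := by
  constructor
  · ext t; simp only [Finset.mem_inter, Finset.mem_union]
    constructor
    · rintro ⟨h1 | h1, h2⟩
      · exact h1
      · exact absurd h2 (Finset.disjoint_right.mp hdisj (hy h1))
    · exact fun h => ⟨Or.inl h, hx h⟩
  · ext t; simp only [Finset.mem_inter, Finset.mem_union]
    constructor
    · rintro ⟨h1 | h1, h2⟩
      · exact absurd h2 (Finset.disjoint_left.mp hdisj (hx h1))
      · exact h1
    · exact fun h => ⟨Or.inr h, hy h⟩

theorem cancellative_product {α : Type*} [DecidableEq α]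
    (S S' : Finset α) (hdisj : Disjoint S S')
    (A B A' B' : Finset (Finset α))
    (hAS : ∀ a ∈ A, a ⊆ S) (hBS : ∀ b ∈ B, b ⊆ S)
    (hAS' : ∀ a ∈ A', a ⊆ S') (hBS' : ∀ b ∈ B', b ⊆ S')
    (hc : Cancellative A B) (hc' : Cancellative A' B') :
    Cancellative ((A ×ˢ A').image fun p => p.1 ∪ p.2)
                 ((B ×ˢ B').image fun p => p.1 ∪ p.2) ∧
    (∀ a ∈ (A ×ˢ A').image fun p : Finset α × Finset α => p.1 ∪ p.2, a ⊆ S ∪ S') ∧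
    (∀ b ∈ (B ×ˢ B').image fun p : Finset α × Finset α => p.1 ∪ p.2, b ⊆ S ∪ S') ∧
    ((A ×ˢ A').image fun p => p.1 ∪ p.2).card = A.card * A'.card ∧
    ((B ×ˢ B').image fun p => p.1 ∪ p.2).card = B.card * B'.card := by
  obtain ⟨hc1, hc2⟩ := hc
  obtain ⟨hc1', hc2'⟩ := hc'
  have key : ∀ {x y u v : Finset α}, x ⊆ S → y ⊆ S' → u ⊆ S → v ⊆ S' →
      x ∪ y = u ∪ v → x = u ∧ y = v := by
    intro x y u v hx hy hu hv h
    obtain ⟨e1, e2⟩ := inter_split hdisj hx hy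
    obtain ⟨f1, f2⟩ := inter_split hdisj hu hv
    rw [h] at e1 e2
    exact ⟨e1.symm.trans f1, e2.symm.trans f2⟩
  have injA : ∀ p ∈ A ×ˢ A', ∀ q ∈ A ×ˢ A',
      (fun p : Finset α × Finset α => p.1 ∪ p.2) p =
      (fun p : Finset α × Finset α => p.1 ∪ p.2) q → p = q := by
    rintro ⟨x, y⟩ hp ⟨u, v⟩ hq h
    simp only [Finset.mem_product] at hp hq
    obtain ⟨e1, e2⟩ := key (hAS _ hp.1) (hAS' _ hp.2) (hAS _ hq.1) (hAS' _ hq.2) h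
    simp [Prod.ext_iff, e1, e2]
  have injB : ∀ p ∈ B ×ˢ B', ∀ q ∈ B ×ˢ B',
      (fun p : Finset α × Finset α => p.1 ∪ p.2) p =
      (fun p : Finset α × Finset α => p.1 ∪ p.2) q → p = q := by
    rintro ⟨x, y⟩ hp ⟨u, v⟩ hq h
    simp only [Finset.mem_product] at hp hq
    obtain ⟨e1, e2⟩ := key (hBS _ hp.1) (hBS' _ hp.2) (hBS _ hq.1) (hBS' _ hq.2) h
    simp [Prod.ext_iff, e1, e2]
  refine ⟨⟨?_, ?_⟩, ?_, ?_, ?_, ?_⟩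
  · rintro a1 ha1 a2 ha2 b hb h
    simp only [Finset.mem_image, Finset.mem_product, Prod.exists] at ha1 ha2 hb
    obtain ⟨x1, y1, ⟨hx1, hy1⟩, rfl⟩ := ha1
    obtain ⟨x2, y2, ⟨hx2, hy2⟩, rfl⟩ := ha2
    obtain ⟨u, v, ⟨hu, hv⟩, rfl⟩ := hb
    have e1 : (x1 ∪ u) ∪ (y1 ∪ v) = x1 ∪ y1 ∪ (u ∪ v) := by ac_rfl
    have e2 : (x2 ∪ u) ∪ (y2 ∪ v) = x2 ∪ y2 ∪ (u ∪ v) := by ac_rfl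
    have h' := e1.trans (h.trans e2.symm)
    have := key (Finset.union_subset (hAS _ hx1) (hBS _ hu))
      (Finset.union_subset (hAS' _ hy1) (hBS' _ hv))
      (Finset.union_subset (hAS _ hx2) (hBS _ hu))
      (Finset.union_subset (hAS' _ hy2) (hBS' _ hv)) h'
    rw [hc1 _ hx1 _ hx2 _ hu this.1, hc1' _ hy1 _ hy2 _ hv this.2]
  · rintro a ha b1 hb1 b2 hb2 h
    simp only [Finset.mem_image, Finset.mem_product, Prod.exists] at ha hb1 hb2
    obtain ⟨x, y, ⟨hx, hy⟩, rfl⟩ := ha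
    obtain ⟨u1, v1, ⟨hu1, hv1⟩, rfl⟩ := hb1
    obtain ⟨u2, v2, ⟨hu2, hv2⟩, rfl⟩ := hb2
    have e1 : (x ∪ u1) ∪ (y ∪ v1) = x ∪ y ∪ (u1 ∪ v1) := by ac_rfl
    have e2 : (x ∪ u2) ∪ (y ∪ v2) = x ∪ y ∪ (u2 ∪ v2) := by ac_rfl
    have h' := e1.trans (h.trans e2.symm)
    have := key (Finset.union_subset (hAS _ hx) (hBS _ hu1))
      (Finset.union_subset (hAS' _ hy) (hBS' _ hv1))
      (Finset.union_subset (hAS _ hx) (hBS _ hu2))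
      (Finset.union_subset (hAS' _ hy) (hBS' _ hv2)) h'
    rw [hc2 _ hx _ hu1 _ hu2 this.1, hc2' _ hy _ hv1 _ hv2 this.2]
  · rintro a ha
    simp only [Finset.mem_image, Finset.mem_product, Prod.exists] at ha
    obtain ⟨x, y, ⟨hx, hy⟩, rfl⟩ := ha
    exact Finset.union_subset_union (hAS _ hx) (hAS' _ hy)
  · rintro b hb
    simp only [Finset.mem_image, Finset.mem_product, Prod.exists] at hb
    obtain ⟨x, y, ⟨hx, hy⟩, rfl⟩ := hb
    exact Finset.union_subset_union (hBS _ hx) (hBS' _ hy)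
  · rw [Finset.card_image_of_injOn injA, Finset.card_product]
  · rw [Finset.card_image_of_injOn injB, Finset.card_product]
end

section
/- Suppose γ ≥ 2.25 and κ ≥ 0. Let L(p,q) = p*h(q) + q*h(p) + κ*(p+q) where h is the binary entropy function. Then any maximizer (p,q) of L over the region {(p,q) : 0 ≤ p,q ≤ 1, p*q ≤ 1/γ} satisfies p*q = 1/γ. -/
noncomputable def binH (x : ℝ) : ℝ := -x * Real.logb 2 x - (1 - x) * Real.logb 2 (1 - x)

lemma binH_eq (x : ℝ) : binH x = Real.binEntropy x / Real.log 2 := by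
  unfold binH Real.binEntropy Real.logb
  rw [Real.log_inv, Real.log_inv]
  ring

lemma binH_fun : binH = fun x => Real.binEntropy x / Real.log 2 := funext binH_eq

lemma continuous_binH : Continuous binH := by
  rw [binH_fun]; exact Real.binEntropy_continuous.div_const _

lemma hasDerivAt_binH {t : ℝ} (h0 : t ≠ 0) (h1 : t ≠ 1) :
    HasDerivAt binH ((Real.log (1 - t) - Real.log t) / Real.log 2) t := by
  rw [binH_fun]
  exact (Real.hasDerivAt_binEntropy h0 h1).div_const _

lemma log_cube : 3 * Real.log 3 < 5 * Real.log 2 := by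
  have h := Real.log_lt_log (by norm_num : (0:ℝ) < 27) (by norm_num : (27:ℝ) < 32)
  rw [show (27:ℝ) = 3^3 by norm_num, show (32:ℝ) = 2^5 by norm_num,
    Real.log_pow, Real.log_pow] at h
  push_cast at h; linarith

lemma log_big : 24 * Real.log 2 < 5 * Real.log 5 + 4 * Real.log 11 := by
  have h := Real.log_lt_log (by norm_num : (0:ℝ) < 16777216)
    (by norm_num : (16777216:ℝ) < 45753125)
  rw [show (16777216:ℝ) = 2^24 by norm_num,
    show (45753125:ℝ) = 5^5 * 11^4 by norm_num,
    Real.log_mul (by positivity) (by positivity),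
    Real.log_pow, Real.log_pow, Real.log_pow] at h
  push_cast at h; linarith

lemma bE34 : Real.binEntropy (3/4) = 2 * Real.log 2 - (3/4) * Real.log 3 := by
  rw [Real.binEntropy, show ((3:ℝ)/4)⁻¹ = 4/3 by norm_num,
    show (1 - (3:ℝ)/4) = 1/4 by norm_num, show ((1:ℝ)/4)⁻¹ = 4 by norm_num,
    Real.log_div (by norm_num) (by norm_num),
    show (4:ℝ) = 2^2 by norm_num, Real.log_pow]
  push_cast; ring

lemma bE45 : Real.binEntropy (4/5) = Real.log 5 - (8/5) * Real.log 2 := by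
  rw [Real.binEntropy, show ((4:ℝ)/5)⁻¹ = 5/4 by norm_num,
    show (1 - (4:ℝ)/5) = 1/5 by norm_num, show ((1:ℝ)/5)⁻¹ = 5 by norm_num,
    Real.log_div (by norm_num) (by norm_num),
    show (4:ℝ) = 2^2 by norm_num, Real.log_pow]
  push_cast; ring

lemma key {t q : ℝ} (hq : 1/2 ≤ q) (hq1 : q ≤ 1) (ht1 : 1/2 ≤ t) (ht2 : t < 2/3)
    (htq : t * q < 4/9) : q * (Real.log t - Real.log (1 - t)) < Real.binEntropy q := by
  have ht0 : (0:ℝ) < t := by linarith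
  have h1t : (0:ℝ) < 1 - t := by linarith
  have hq0 : (0:ℝ) < q := by linarith
  have hlogdiv : Real.log t - Real.log (1 - t) = Real.log (t / (1 - t)) :=
    (Real.log_div ht0.ne' h1t.ne').symm
  rcases le_or_gt q (3/4) with hq34 | hq34
  · -- q ≤ 3/4 : use t/(1-t) < 2
    have hr2 : t / (1 - t) < 2 := by rw [div_lt_iff₀ h1t]; linarith
    have hlt : Real.log t - Real.log (1 - t) < Real.log 2 := by
      rw [hlogdiv]; exact Real.log_lt_log (div_pos ht0 h1t) hr2
    have h2 : q * (Real.log t - Real.log (1 - t)) < q * Real.log 2 :=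
      mul_lt_mul_of_pos_left hlt hq0
    have h3 : q * Real.log 2 ≤ (3/4) * Real.log 2 :=
      mul_le_mul_of_nonneg_right hq34 (Real.log_nonneg one_le_two)
    have h4 : (3/4 : ℝ) * Real.log 2 < Real.binEntropy (3/4) := by
      rw [bE34]; linarith [log_cube]
    have h5 : Real.binEntropy (3/4) ≤ Real.binEntropy q := by
      rcases eq_or_lt_of_le hq34 with h | h
      · rw [h]
      · exact (Real.binEntropy_strictAntiOn ⟨by norm_num; linarith, hq1⟩
          ⟨by norm_num, by norm_num⟩ h).le
    linarith
  · rcases le_or_gt q (4/5) with hq45 | hq45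
    · -- 3/4 < q ≤ 4/5 : t < 16/27, use t/(1-t) < 16/11
      have ht27 : t < 16/27 := by nlinarith [mul_lt_mul_of_pos_left hq34 ht0]
      have hr : t / (1 - t) < 16/11 := by rw [div_lt_iff₀ h1t]; linarith
      have hlt : Real.log t - Real.log (1 - t) < Real.log (16/11) := by
        rw [hlogdiv]; exact Real.log_lt_log (div_pos ht0 h1t) hr
      have h2 : q * (Real.log t - Real.log (1 - t)) < q * Real.log (16/11) :=
        mul_lt_mul_of_pos_left hlt hq0
      have h3 : q * Real.log (16/11) ≤ (4/5) * Real.log (16/11) :=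
        mul_le_mul_of_nonneg_right hq45 (Real.log_nonneg (by norm_num))
      have e1611 : Real.log ((16:ℝ)/11) = 4 * Real.log 2 - Real.log 11 := by
        rw [Real.log_div (by norm_num) (by norm_num), show (16:ℝ) = 2^4 by norm_num,
          Real.log_pow]
        push_cast; ring
      have h4 : (4/5 : ℝ) * Real.log (16/11) < Real.binEntropy (4/5) := by
        rw [bE45, e1611]; linarith [log_big]
      have h5 : Real.binEntropy (4/5) ≤ Real.binEntropy q := by
        rcases eq_or_lt_of_le hq45 with h | h
        · rw [h]
        · exact (Real.binEntropy_strictAntiOn ⟨by norm_num; linarith, hq1⟩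
            ⟨by norm_num, by norm_num⟩ h).le
      linarith
    · -- q > 4/5
      have hq89 : q < 8/9 := by nlinarith
      have h1q : (0:ℝ) < 1 - q := by linarith
      have e1 : t * q * (1 + q) < (4/9) * (1 + q) :=
        mul_lt_mul_of_pos_right htq (by linarith)
      have e2 : (4/9 : ℝ) * (1 + q) ≤ q := by linarith
      have e3 : (t * q + t) * q < 1 * q := by nlinarith [e1, e2]
      have hsum : t * q + t < 1 := lt_of_mul_lt_mul_right e3 hq0.le
      have hr : t / (1 - t) ≤ q⁻¹ := by
        rw [div_le_iff₀ h1t, show q⁻¹ * (1 - t) = (1 - t) / q by ring, le_div_iff₀ hq0]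
        linarith
      have hlt : Real.log t - Real.log (1 - t) ≤ Real.log q⁻¹ := by
        rw [hlogdiv]; exact Real.log_le_log (div_pos ht0 h1t) hr
      have h2 : q * (Real.log t - Real.log (1 - t)) ≤ q * Real.log q⁻¹ :=
        mul_le_mul_of_nonneg_left hlt hq0.le
      have h3 : q * Real.log q⁻¹ < Real.binEntropy q := by
        rw [Real.binEntropy]
        have hpos : 0 < (1 - q) * Real.log (1 - q)⁻¹ :=
          mul_pos h1q (Real.log_pos ((one_lt_inv₀ h1q).2 (by linarith)))
        linarith
      linarith

lemma improve (κ q a b : ℝ) (hκ : 0 ≤ κ) (hq0 : 0 < q) (ha0 : 0 ≤ a) (hab : a < b)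
    (hb1 : b ≤ 1)
    (hder : ∀ t ∈ Set.Ioo a b,
      q * (Real.log t - Real.log (1 - t)) < Real.binEntropy q + κ * Real.log 2) :
    a * binH q + q * binH a + κ * (a + q) < b * binH q + q * binH b + κ * (b + q) := by
  have hlog2 : (0:ℝ) < Real.log 2 := Real.log_pos one_lt_two
  set φ : ℝ → ℝ := fun t => t * binH q + q * binH t + κ * (t + q) with hφ
  have hcont : ContinuousOn φ (Set.Icc a b) :=
    (((continuous_id.mul continuous_const).add
      (continuous_const.mul continuous_binH)).add
      (continuous_const.mul (continuous_id.add continuous_const))).continuousOn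
  have hderiv : ∀ t ∈ interior (Set.Icc a b), 0 < deriv φ t := by
    rw [interior_Icc]
    rintro t ⟨hta, htb⟩
    have ht0 : 0 < t := lt_of_le_of_lt ha0 hta
    have ht1 : t < 1 := lt_of_lt_of_le htb hb1
    have hd : HasDerivAt φ
        (1 * binH q + q * ((Real.log (1 - t) - Real.log t) / Real.log 2) + κ * 1) t := by
      have h3 : HasDerivAt (fun x : ℝ => κ * (x + q)) (κ * 1) t :=
        ((hasDerivAt_id t).add_const q).const_mul κ
      exact
      (((hasDerivAt_id t).mul_const (binH q)).add
        ((hasDerivAt_binH ht0.ne' (ne_of_lt ht1)).const_mul q)).add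
        (((hasDerivAt_id t).add_const q).const_mul κ)
    rw [hd.deriv, binH_eq]
    have hk := hder t ⟨hta, htb⟩
    have e : 1 * (Real.binEntropy q / Real.log 2)
        + q * ((Real.log (1 - t) - Real.log t) / Real.log 2) + κ * 1
        = (Real.binEntropy q + q * (Real.log (1 - t) - Real.log t) + κ * Real.log 2)
          / Real.log 2 := by
      field_simp
    rw [e]
    apply div_pos _ hlog2
    nlinarith [hk]
  have hmono := strictMonoOn_of_deriv_pos (convex_Icc a b) hcont hderiv
  have := hmono (Set.left_mem_Icc.2 hab.le) (Set.right_mem_Icc.2 hab.le) hab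
  simpa [hφ] using this

lemma main_le (γ κ : ℝ) (hγ : (9:ℝ)/4 ≤ γ) (hκ : 0 ≤ κ)
    (p q : ℝ) (hp : p ∈ Set.Icc (0:ℝ) 1) (hq : q ∈ Set.Icc (0:ℝ) 1)
    (hpq : p * q ≤ 1 / γ) (hle : p ≤ q)
    (hmax : ∀ p' q' : ℝ, p' ∈ Set.Icc (0:ℝ) 1 → q' ∈ Set.Icc (0:ℝ) 1 →
      p' * q' ≤ 1 / γ →
      p' * binH q' + q' * binH p' + κ * (p' + q') ≤
        p * binH q + q * binH p + κ * (p + q)) :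
    p * q = 1 / γ := by
  obtain ⟨hp0, hp1⟩ := hp
  obtain ⟨hq0, hq1⟩ := hq
  have hγ0 : (0:ℝ) < γ := by linarith
  have hγinv : (0:ℝ) < 1/γ := by positivity
  have h49 : 1/γ ≤ 4/9 := by
    rw [div_le_div_iff₀ hγ0 (by norm_num)]
    linarith
  by_contra hne
  have hlt : p * q < 1/γ := lt_of_le_of_ne hpq hne
  have hlog2 : (0:ℝ) < Real.log 2 := Real.log_pos one_lt_two
  rcases eq_or_lt_of_le hq0 with hq0' | hq0'
  · -- q = 0, hence p = 0; compare with (ε, ε)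
    have hp0' : p = 0 := le_antisymm (hq0' ▸ hle) hp0
    subst hp0'
    rw [← hq0'] at hmax hlt
    set ε : ℝ := min (1/2) (1/γ) with hε
    have hε0 : 0 < ε := lt_min (by norm_num) hγinv
    have hε12 : ε ≤ 1/2 := min_le_left _ _
    have hεγ : ε ≤ 1/γ := min_le_right _ _
    have hfeas : ε * ε ≤ 1/γ := by nlinarith
    have h := hmax ε ε ⟨hε0.le, by linarith⟩ ⟨hε0.le, by linarith⟩ hfeas
    have hbinHε : 0 < binH ε := by
      rw [binH_eq]
      exact div_pos (Real.binEntropy_pos hε0 (by linarith)) hlog2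
    simp only [zero_mul, mul_zero, add_zero, zero_add] at h
    nlinarith [mul_pos hε0 hbinHε, mul_nonneg hκ hε0.le]
  · -- q > 0
    have hpq23 : p < 2/3 := by
      nlinarith [mul_le_mul_of_nonneg_left hle hp0]
    set c : ℝ := if p < 1/2 then (1/2:ℝ) else 2/3 with hc
    have hpc : p < c := by
      rw [hc]; split_ifs with h
      · linarith
      · exact hpq23
    have hc1 : c ≤ 1 := by
      rw [hc]; split_ifs <;> norm_num
    set b : ℝ := min ((p + c)/2) ((p*q + 1/γ)/(2*q)) with hb
    have h2q : (0:ℝ) < 2*q := by linarith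
    have hpb : p < b := by
      apply lt_min
      · linarith
      · rw [lt_div_iff₀ h2q]; nlinarith
    have hbc : b < c := lt_of_le_of_lt (min_le_left _ _) (by linarith)
    have hb1 : b ≤ 1 := by linarith
    have hbγ : b * q < 1/γ := by
      have h1 : b ≤ (p*q + 1/γ)/(2*q) := min_le_right _ _
      have h2 : b * (2*q) ≤ p*q + 1/γ := by
        rw [← le_div_iff₀ h2q]; exact h1
      nlinarith
    have hder : ∀ t ∈ Set.Ioo p b,
        q * (Real.log t - Real.log (1 - t)) < Real.binEntropy q + κ * Real.log 2 := by
      rintro t ⟨htp, htb⟩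
      have hκlog : 0 ≤ κ * Real.log 2 := mul_nonneg hκ hlog2.le
      by_cases h12 : p < 1/2
      · have hc12 : c = 1/2 := by rw [hc, if_pos h12]
        have ht12 : t < 1/2 := by
          have := lt_trans htb hbc
          linarith [hc12 ▸ this]
        have ht0 : 0 < t := lt_of_le_of_lt hp0 htp
        have hloglt : Real.log t < Real.log (1 - t) := Real.log_lt_log ht0 (by linarith)
        have hneg : q * (Real.log t - Real.log (1 - t)) < 0 :=
          mul_neg_of_pos_of_neg hq0' (by linarith)
        have hbE : 0 ≤ Real.binEntropy q := Real.binEntropy_nonneg hq0 hq1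
        linarith
      · have hc23 : c = 2/3 := by rw [hc, if_neg h12]
        have hp12 : 1/2 ≤ p := le_of_not_gt h12
        have ht2 : t < 2/3 := by
          have := lt_trans htb hbc
          linarith [hc23 ▸ this]
        have htq : t * q < 4/9 := by
          have hmul : t * q < b * q := mul_lt_mul_of_pos_right htb hq0'
          linarith
        have hkey := key (by linarith : 1/2 ≤ q) hq1 (by linarith : 1/2 ≤ t) ht2 htq
        linarith
    have himp := improve κ q p b hκ hq0' hp0 hpb hb1 hder
    have h := hmax b q ⟨by linarith, hb1⟩ ⟨hq0, hq1⟩ hbγ.le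
    linarith

theorem maximizer_on_boundary (γ κ : ℝ) (hγ : 2.25 ≤ γ) (hκ : 0 ≤ κ)
    (p q : ℝ) (hp : p ∈ Set.Icc (0:ℝ) 1) (hq : q ∈ Set.Icc (0:ℝ) 1)
    (hpq : p * q ≤ 1 / γ)
    (hmax : ∀ p' q' : ℝ, p' ∈ Set.Icc (0:ℝ) 1 → q' ∈ Set.Icc (0:ℝ) 1 →
      p' * q' ≤ 1 / γ →
      p' * binH q' + q' * binH p' + κ * (p' + q') ≤
        p * binH q + q * binH p + κ * (p + q)) :
    p * q = 1 / γ := by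
  have hγ' : (9:ℝ)/4 ≤ γ := by norm_num at hγ ⊢; linarith
  rcases le_total p q with h | h
  · exact main_le γ κ hγ' hκ p q hp hq hpq h hmax
  · have hmax' : ∀ p' q' : ℝ, p' ∈ Set.Icc (0:ℝ) 1 → q' ∈ Set.Icc (0:ℝ) 1 →
        p' * q' ≤ 1 / γ →
        p' * binH q' + q' * binH p' + κ * (p' + q') ≤
          q * binH p + p * binH q + κ * (q + p) := by
      intro p' q' h1 h2 h3
      have := hmax q' p' h2 h1 (by rwa [mul_comm])
      linarith
    have := main_le γ κ hγ' hκ q p hq hp (by rwa [mul_comm]) h hmax'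
    rw [mul_comm]; exact this
end

section
/- Fix γ ≥ 2.25 and κ ≥ 0, and let ψ be the maximum of L(p,q) = p*h(q) + q*h(p) + κ*(p+q) over {(p,q) : 0 ≤ p,q ≤ 1, p*q = 1/γ}. Then for any x ≥ 2, any positive integer n, and any sequences p_1,...,p_n, q_1,...,q_n in [0,1] satisfying p_i*q_i ≤ 1/γ for all i and Σp_i = Σq_i ≥ n*(1 - 1/x), we have (1/n) * Σᵢ f(p_i, q_i) ≤ ψ - 2κ(1 - 1/x), where f(p,q) = p*h(q) + q*h(p). -/
noncomputable def fHK (p q : ℝ) : ℝ := p * binH q + q * binH p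

theorem lagrange_bound (γ κ x ψ : ℝ) (hγ : 2.25 ≤ γ) (hκ : 0 ≤ κ) (hx : 2 ≤ x)
    (hψ : ∀ p q : ℝ, p ∈ Set.Icc (0:ℝ) 1 → q ∈ Set.Icc (0:ℝ) 1 →
      p * q ≤ 1 / γ → fHK p q + κ * (p + q) ≤ ψ)
    (n : ℕ) (hn : 0 < n) (p q : Fin n → ℝ)
    (hp : ∀ i, p i ∈ Set.Icc (0:ℝ) 1) (hq : ∀ i, q i ∈ Set.Icc (0:ℝ) 1)
    (hpq : ∀ i, p i * q i ≤ 1 / γ)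
    (hsum : ∑ i, p i = ∑ i, q i) (hsum2 : ∑ i, p i ≥ n * (1 - 1/x)) :
    (1 / n) * ∑ i, fHK (p i) (q i) ≤ ψ - 2 * κ * (1 - 1/x) := by
  have hn' : (0:ℝ) < n := Nat.cast_pos.mpr hn
  have key : ∑ i, fHK (p i) (q i) ≤ n * ψ - κ * (∑ i, p i + ∑ i, q i) := by
    have h1 : ∑ i, fHK (p i) (q i) ≤ ∑ i : Fin n, (ψ - κ * (p i + q i)) := by
      apply Finset.sum_le_sum
      intro i _
      linarith [hψ (p i) (q i) (hp i) (hq i) (hpq i)]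
    calc ∑ i, fHK (p i) (q i) ≤ ∑ i : Fin n, (ψ - κ * (p i + q i)) := h1
      _ = n * ψ - κ * (∑ i, p i + ∑ i, q i) := by
          simp [Finset.sum_sub_distrib, Finset.mul_sum, Finset.sum_add_distrib,
            mul_add, mul_comm]
  have h2 : κ * (∑ i, p i + ∑ i, q i) ≥ κ * (2 * (n * (1 - 1/x))) := by
    apply mul_le_mul_of_nonneg_left _ hκ
    rw [← hsum]; linarith
  have h3 : ∑ i, fHK (p i) (q i) ≤ n * (ψ - 2 * κ * (1 - 1/x)) := by nlinarith
  rw [div_mul_eq_mul_div, div_le_iff₀ hn', one_mul]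
  linarith
end

section
/- Let (A,B) be a nonempty cancellative pair of k-uniform families over [n] with n/k > 3.6. Then there exists i ∈ [n] such that p_i * q_i > 1/2.25, where p_i = |{a ∈ A : i ∉ a}|/|A| and q_i = |{b ∈ B : i ∉ b}|/|B|. Consequently |A ∩ A_i| * |B ∩ B_i| > |A|*|B|/2.25, where A_i = {a ∈ A : i ∉ a} and B_i = {b ∈ B : i ∉ b}. -/
lemma sum_count (n k : ℕ) (A : Finset (Finset (Fin n)))
    (hA : ∀ a ∈ A, a.card = k) :
    ∑ i : Fin n, (A.filter fun a => i ∉ a).card = A.card * (n - k) := by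
  calc ∑ i : Fin n, (A.filter fun a => i ∉ a).card
      = ∑ i : Fin n, ∑ a ∈ A, if i ∉ a then 1 else 0 := by
        simp [Finset.card_filter]
    _ = ∑ a ∈ A, ∑ i : Fin n, if i ∉ a then 1 else 0 := Finset.sum_comm
    _ = ∑ a ∈ A, (n - k) := by
        refine Finset.sum_congr rfl fun a ha => ?_
        have h1 : (∑ i : Fin n, if i ∉ a then 1 else 0) =
            (Finset.univ.filter fun i => i ∉ a).card := (Finset.card_filter _ _).symm
        have h2 : (Finset.univ.filter fun i => i ∉ a) = aᶜ := by ext; simp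
        rw [h1, h2, Finset.card_compl, hA a ha, Fintype.card_fin]
    _ = A.card * (n - k) := by rw [Finset.sum_const, smul_eq_mul]

theorem exists_large_pq (n k : ℕ) (A B : Finset (Finset (Fin n)))
    (hc : Cancellative A B) (hA0 : A.Nonempty) (hB0 : B.Nonempty)
    (hA : ∀ a ∈ A, a.card = k) (hB : ∀ b ∈ B, b.card = k)
    (hk : 0 < k) (hratio : (n : ℝ) / k > 3.6) :
    ∃ i : Fin n,
      (((A.filter fun a => i ∉ a).card : ℝ) / A.card) *
        (((B.filter fun b => i ∉ b).card : ℝ) / B.card) > 1 / 2.25 ∧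
      ((A.filter fun a => i ∉ a).card : ℝ) * ((B.filter fun b => i ∉ b).card : ℝ) >
        (A.card : ℝ) * B.card / 2.25 := by
  have hAc : (0:ℝ) < A.card := by exact_mod_cast hA0.card_pos
  have hBc : (0:ℝ) < B.card := by exact_mod_cast hB0.card_pos
  have hkR : (0:ℝ) < k := by exact_mod_cast hk
  have hn : (3.6:ℝ) * k < n := (lt_div_iff₀ hkR).mp hratio
  have hkn : k ≤ n := by
    have : (k:ℝ) ≤ n := by nlinarith
    exact_mod_cast this
  have hnkR : ((n - k : ℕ) : ℝ) = (n:ℝ) - k := by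
    rw [Nat.cast_sub hkn]
  have sA : ∑ i : Fin n, ((A.filter fun a => i ∉ a).card : ℝ) = A.card * ((n:ℝ) - k) := by
    rw [← hnkR, ← Nat.cast_sum]
    exact_mod_cast congrArg (Nat.cast : ℕ → ℝ) (sum_count n k A hA)
  have sB : ∑ i : Fin n, ((B.filter fun b => i ∉ b).card : ℝ) = B.card * ((n:ℝ) - k) := by
    rw [← hnkR, ← Nat.cast_sum]
    exact_mod_cast congrArg (Nat.cast : ℕ → ℝ) (sum_count n k B hB)
  set p : Fin n → ℝ := fun i => ((A.filter fun a => i ∉ a).card : ℝ) / A.card with hp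
  set q : Fin n → ℝ := fun i => ((B.filter fun b => i ∉ b).card : ℝ) / B.card with hq
  have sp : ∑ i : Fin n, p i = (n:ℝ) - k := by
    simp only [hp, ← Finset.sum_div, sA]
    field_simp
  have sq : ∑ i : Fin n, q i = (n:ℝ) - k := by
    simp only [hq, ← Finset.sum_div, sB]
    field_simp
  have hlt : ∑ i : Fin n, (13/9 : ℝ) < ∑ i : Fin n, (p i + q i) := by
    rw [Finset.sum_add_distrib, sp, sq, Finset.sum_const, Finset.card_univ, Fintype.card_fin,
      nsmul_eq_mul]
    nlinarith
  obtain ⟨i, -, hi⟩ := Finset.exists_lt_of_sum_lt hlt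
  have hp1 : p i ≤ 1 := by
    rw [hp, div_le_one hAc]
    exact_mod_cast Finset.card_filter_le _ _
  have hq1 : q i ≤ 1 := by
    rw [hq, div_le_one hBc]
    exact_mod_cast Finset.card_filter_le _ _
  have hpq : p i * q i > 1 / 2.25 := by nlinarith
  refine ⟨i, hpq, ?_⟩
  have heq : ((A.filter fun a => i ∉ a).card : ℝ) * ((B.filter fun b => i ∉ b).card : ℝ)
      = (p i * q i) * (A.card * B.card) := by
    rw [hp, hq]; field_simp
  rw [heq, gt_iff_lt, div_lt_iff₀ (by norm_num : (0:ℝ) < 2.25)]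
  nlinarith [mul_pos hAc hBc, mul_lt_mul_of_pos_right hpq (mul_pos hAc hBc)]
end
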